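/- arXiv:1904.10569 — 3 statements merged into one kernel-verified Lean document; each statement's English description precedes it below -/
import Mathlib

section
/- The polynomial p(x) = 13x^5 - 6x^4 - 2x^3 - 4x^2 - 3x + 2 has x = 1 as a root and all other roots lie strictly inside the open unit disk in ℂ. -/
open Polynomial Finset

/-! Dividing out the root `1` leaves `q = 13z⁴ + 7z³ + 5z² + z - 2`, whose leading coefficient does
not dominate the others (`13 < 7 + 5 + 1 + 2`). Multiplying by `5z - 1` gives
`65z⁵ + 22z⁴ + 18z³ - 11z + 2`, where `65 > 22 + 18 + 11 + 2`, so for `‖z‖ ≥ 1` the leading term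
outweighs all the others together. -/

theorem Polynomial.norm_lt_one_of_isRoot_of_sum_norm_coeff_lt {K : Type*} [NormedField K]
    {p : K[X]} (hp : ∑ i ∈ range p.natDegree, ‖p.coeff i‖ < ‖p.leadingCoeff‖)
    {z : K} (hz : p.IsRoot z) : ‖z‖ < 1 := by
  by_contra! hr
  set n := p.natDegree
  have hlead : p.leadingCoeff * z ^ n = -∑ i ∈ range n, p.coeff i * z ^ i := by
    rw [IsRoot, eval_eq_sum_range, sum_range_succ] at hz
    exact eq_neg_of_add_eq_zero_right hz
  have hpos : 0 < ‖z‖ ^ n := pow_pos (zero_lt_one.trans_le hr) n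
  have : ‖p.leadingCoeff‖ * ‖z‖ ^ n ≤ (∑ i ∈ range n, ‖p.coeff i‖) * ‖z‖ ^ n :=
    calc ‖p.leadingCoeff‖ * ‖z‖ ^ n = ‖∑ i ∈ range n, p.coeff i * z ^ i‖ := by
          rw [← norm_pow, ← norm_mul, hlead, norm_neg]
      _ ≤ ∑ i ∈ range n, ‖p.coeff i‖ * ‖z‖ ^ i := by
          simpa only [norm_mul, norm_pow] using norm_sum_le (range n) fun i ↦ p.coeff i * z ^ i
      _ ≤ ∑ i ∈ range n, ‖p.coeff i‖ * ‖z‖ ^ n := by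
          gcongr with i hi
          exact (mem_range.mp hi).le
      _ = (∑ i ∈ range n, ‖p.coeff i‖) * ‖z‖ ^ n := (sum_mul ..).symm
  exact (mul_lt_mul_of_pos_right hp hpos).not_ge this

theorem stmt5 :
    (13 * (X : ℂ[X])^5 - 6 * X^4 - 2 * X^3 - 4 * X^2 - 3 * X + 2).eval 1 = 0 ∧
    ∀ z : ℂ, (13 * (X : ℂ[X])^5 - 6 * X^4 - 2 * X^3 - 4 * X^2 - 3 * X + 2).eval z = 0 →
      z ≠ 1 → ‖z‖ < 1 := by
  refine ⟨by norm_num, fun z hz hz1 ↦ ?_⟩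
  simp only [eval_add, eval_sub, eval_mul, eval_pow, eval_ofNat, eval_X] at hz
  have hq : 13 * z ^ 4 + 7 * z ^ 3 + 5 * z ^ 2 + z - 2 = 0 := by
    have hfac : (z - 1) * (13 * z ^ 4 + 7 * z ^ 3 + 5 * z ^ 2 + z - 2) = 0 := by
      linear_combination hz
    exact (mul_eq_zero.mp hfac).resolve_left (sub_ne_zero.mpr hz1)
  have hdeg : (65 * X ^ 5 + 22 * X ^ 4 + 18 * X ^ 3 - 11 * X + 2 : ℂ[X]).natDegree = 5 := by
    compute_degree!
  refine norm_lt_one_of_isRoot_of_sum_norm_coeff_lt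
    (p := 65 * X ^ 5 + 22 * X ^ 4 + 18 * X ^ 3 - 11 * X + 2) ?_ ?_
  · rw [leadingCoeff, hdeg]
    norm_num [sum_range_succ, coeff_X]
  · simp only [IsRoot, eval_add, eval_sub, eval_mul, eval_pow, eval_ofNat, eval_X]
    linear_combination (5 * z - 1) * hq
end

section
/- The normalized polynomial p(x) = x^4 + (1/8)x^3 - (3/4)x^2 - (5/8)x + 1/4 equals (1/8)(8x^4 + x^3 - 6x^2 - 5x + 2), has maximal-modulus root of modulus exactly 1 at x = 1, and its second largest root modulus is strictly less than 0.95. -/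
/-!
The quartic is `(z - 1) q(z)` with `q(t) = t³ + 9/8 t² + 3/8 t - 1/4`. Writing
`q(t) = (t + 1/2)² (t + 1/8) - 9/32` shows that every real root of `q` lies in `(0.3, 0.31)`.
A non-real root `z` of `q` comes with `z̄`, so by Vieta the third root is the real number
`r = -9/8 - 2 Re z` and `r |z|² = 1/4`; hence `|z|² < 1/(4 · 0.3) = 5/6 < 0.95²`.
-/

open Polynomial

def cubicFactor {K : Type*} [Field K] (t : K) : K := t ^ 3 + 9 / 8 * t ^ 2 + 3 / 8 * t - 1 / 4

lemma eval_quartic (z : ℂ) :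
    ((X : ℂ[X]) ^ 4 + C (1/8) * X ^ 3 - C (3/4) * X ^ 2 - C (5/8) * X + C (1/4)).eval z =
      (z - 1) * cubicFactor z := by
  simp only [eval_add, eval_sub, eval_mul, eval_pow, eval_X, eval_C, cubicFactor]
  ring

lemma mem_Ioo_of_cubicFactor_eq_zero {r : ℝ} (h : cubicFactor r = 0) : r ∈ Set.Ioo 0.3 0.31 := by
  have hfac : (r + 1/2) ^ 2 * (r + 1/8) = 9/32 := by
    unfold cubicFactor at h; linear_combination h
  have hpos : 0 < r + 1/8 := by
    by_contra! hneg
    nlinarith [sq_nonneg (r + 1/2)]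
  constructor <;> nlinarith [sq_nonneg (r + 1/2)]

lemma cubicFactor_re (z : ℂ) : (cubicFactor z).re =
    z.re ^ 3 - 3 * z.re * z.im ^ 2 + 9/8 * (z.re ^ 2 - z.im ^ 2) + 3/8 * z.re - 1/4 := by
  simp [cubicFactor, pow_succ]
  ring

lemma cubicFactor_im (z : ℂ) :
    (cubicFactor z).im = z.im * (3 * z.re ^ 2 - z.im ^ 2 + 9/4 * z.re + 3/8) := by
  simp [cubicFactor, pow_succ]
  ring

-- Comparing `q(t) = (t² - 2 Re z · t + |z|²)(t - r)` coefficientwise, with `|z|²` eliminated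
-- through the imaginary part of `q(z) = 0`.
lemma cubicFactor_vieta_of_im_ne_zero {z : ℂ} (h : cubicFactor z = 0) (him : z.im ≠ 0) :
    cubicFactor (-9/8 - 2 * z.re) = 0 ∧ (-9/8 - 2 * z.re) * Complex.normSq z = 1/4 := by
  have hre := cubicFactor_re z
  have himeq := cubicFactor_im z
  rw [h, Complex.zero_re, eq_comm] at hre
  rw [h, Complex.zero_im, eq_comm] at himeq
  have hy : z.im ^ 2 = 3 * z.re ^ 2 + 9/4 * z.re + 3/8 := by
    have := (mul_eq_zero.mp himeq).resolve_left him
    linear_combination -this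
  rw [Complex.normSq_apply]
  unfold cubicFactor
  constructor
  · linear_combination hre + (3 * z.re + 9/8) * hy
  · linear_combination hre + z.re * hy

lemma normSq_lt_of_cubicFactor_eq_zero {z : ℂ} (h : cubicFactor z = 0) :
    Complex.normSq z < 5/6 := by
  by_cases him : z.im = 0
  · have hr : cubicFactor z.re = 0 := by
      have hre := cubicFactor_re z
      rw [h, Complex.zero_re, him, eq_comm] at hre
      unfold cubicFactor
      linear_combination hre
    obtain ⟨hlo, hhi⟩ := mem_Ioo_of_cubicFactor_eq_zero hr
    rw [Complex.normSq_apply, him]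
    nlinarith
  · obtain ⟨hroot, hprod⟩ := cubicFactor_vieta_of_im_ne_zero h him
    obtain ⟨hlo, -⟩ := mem_Ioo_of_cubicFactor_eq_zero hroot
    nlinarith [Complex.normSq_nonneg z]

theorem stmt10 :
    ((X : ℂ[X])^4 + C (1/8) * X^3 - C (3/4) * X^2 - C (5/8) * X + C (1/4)) =
      C (1/8) * (8 * X^4 + X^3 - 6 * X^2 - 5 * X + 2) ∧
    ((X : ℂ[X])^4 + C (1/8) * X^3 - C (3/4) * X^2 - C (5/8) * X + C (1/4)).eval 1 = 0 ∧
    ‖(1 : ℂ)‖ = 1 ∧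
    (∀ z : ℂ, ((X : ℂ[X])^4 + C (1/8) * X^3 - C (3/4) * X^2 - C (5/8) * X + C (1/4)).eval z = 0 →
      ‖z‖ ≤ 1) ∧
    (∀ z : ℂ, ((X : ℂ[X])^4 + C (1/8) * X^3 - C (3/4) * X^2 - C (5/8) * X + C (1/4)).eval z = 0 →
      z ≠ 1 → ‖z‖ < 0.95) := by
  have other_roots : ∀ z : ℂ,
      ((X : ℂ[X])^4 + C (1/8) * X^3 - C (3/4) * X^2 - C (5/8) * X + C (1/4)).eval z = 0 →
      z ≠ 1 → ‖z‖ < 0.95 := by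
    intro z hz hz1
    rw [eval_quartic, mul_eq_zero, sub_eq_zero] at hz
    have hsq : ‖z‖ ^ 2 < 0.95 ^ 2 := by
      rw [Complex.sq_norm]
      linarith [normSq_lt_of_cubicFactor_eq_zero (hz.resolve_left hz1)]
    exact lt_of_pow_lt_pow_left₀ 2 (by norm_num) hsq
  refine ⟨?_, by rw [eval_quartic]; ring, norm_one, fun z hz => ?_, other_roots⟩
  · refine Polynomial.funext fun z => ?_
    simp only [eval_add, eval_sub, eval_mul, eval_pow, eval_X, eval_C, eval_ofNat]
    ring
  · rcases eq_or_ne z 1 with rfl | hz1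
    · exact norm_one.le
    · exact (other_roots z hz hz1).le.trans (by norm_num)
end

section
/- The polynomial p(x) = x^6 + (80/237)x^5 - (182/237)x^4 - (206/237)x^3 + (1/237)x^2 + (110/237)x - 40/237 has x = 1 as a root, all roots in the closed unit disk, and every root on the unit circle is simple. -/
/-!
Over ℂ the polynomial factors as `(X - 1) * q` with `q` a real quintic. Since
`p'(1) = 588/237 ≠ 0`, the root `1` is simple. The roots of `q` lie in the open unit disk by a
Lyapunov certificate: let `A` be the companion matrix of `q`, so that `A v = z v` for
`v = (1, z, …, z⁴)` whenever `q(z) = 0`. If `P = ∑ cᵢ gᵢ gᵢᵀ` (with `cᵢ ≥ 0`) solves the Stein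
equation `P - Aᵀ P A = I`, then `(1 - |z|²) v* P v = ‖v‖² > 0`, hence `|z| < 1`.
-/

open Polynomial

theorem Polynomial.rootMultiplicity_eq_one_of_isRoot_of_not_isRoot_derivative {R : Type*}
    [CommRing R] {p : R[X]} {t : R} (hp : p.IsRoot t) (hd : ¬ (derivative p).IsRoot t) :
    p.rootMultiplicity t = 1 := by
  have hp0 : p ≠ 0 := by rintro rfl; simp at hd
  have hpos := (rootMultiplicity_pos hp0).2 hp
  have hle : ¬ 1 < p.rootMultiplicity t := fun h =>
    hd ((one_lt_rootMultiplicity_iff_isRoot hp0).1 h).2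
  omega

open ComplexConjugate in
theorem norm_lt_one_of_stein_identity {m n : ℕ} (hn : n ≠ 0) (q : ℝ[X]) (c : Fin m → ℝ)
    (hc : ∀ i, 0 ≤ c i) (G : Fin m → ℝ[X])
    (hstein : ∀ w z : ℂ, aeval w q = 0 → aeval z q = 0 →
      (1 - w * z) * ∑ i, c i * (aeval w (G i) * aeval z (G i)) = ∑ k ∈ Finset.range n, (w * z) ^ k)
    {z : ℂ} (hz : aeval z q = 0) : ‖z‖ < 1 := by
  have h := hstein (conj z) z (by rw [aeval_conj, hz, map_zero]) hz
  simp only [aeval_conj, ← Complex.normSq_eq_conj_mul_self] at h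
  have hreal : (1 - ‖z‖ ^ 2) * ∑ i, c i * Complex.normSq (aeval z (G i)) =
      ∑ k ∈ Finset.range n, (‖z‖ ^ 2) ^ k := by
    rw [← Complex.normSq_eq_norm_sq]; exact_mod_cast h
  have hS : 0 ≤ ∑ i, c i * Complex.normSq (aeval z (G i)) :=
    Finset.sum_nonneg fun i _ => mul_nonneg (hc i) (Complex.normSq_nonneg _)
  have hR : 0 < ∑ k ∈ Finset.range n, (‖z‖ ^ 2) ^ k :=
    Finset.sum_pos' (fun k _ => by positivity)
      ⟨0, Finset.mem_range.2 (Nat.pos_of_ne_zero hn), by simp⟩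
  have h1 : ‖z‖ ^ 2 < 1 := sub_pos.1 (pos_of_mul_pos_left (hreal ▸ hR) hS)
  exact (sq_lt_one_iff₀ (norm_nonneg z)).1 h1

noncomputable def quinticFactor : ℝ[X] :=
  X ^ 5 + C (317 / 237) * X ^ 4 + C (135 / 237) * X ^ 3 - C (71 / 237) * X ^ 2 - C (70 / 237) * X +
    C (40 / 237)

-- The LDLᵀ factorisation of the solution `P` of `P - Aᵀ P A = I`, `A` the companion matrix of
-- `quinticFactor`: `P = ∑ i, lyapunovWeight i • gᵢ gᵢᵀ` with `gᵢ` the coefficient vector of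
-- `lyapunovSquare i`.
noncomputable def lyapunovWeight : Fin 5 → ℝ :=
  ![1344361738 / 549019863, 511177901526007039 / 80335379289164832,
    401955504727599986241 / 50095434349548689822,
    219664289028997522861936 / 19695819731652399325809,
    73297516018539293125190775 / 3514628624463960365790976]

noncomputable def lyapunovSquare : Fin 5 → ℝ[X] :=
  ![1 - C (8088008625 / 5377446952) * X - C (133237375 / 10754893904) * X ^ 2 +
      C (1631022650 / 672180869) * X ^ 3 + C (29869293675 / 10754893904) * X ^ 4,
    X - C (263204590496020975 / 1022355803052014078) * X ^ 2 -
      C (431028042359239600 / 511177901526007039) * X ^ 3 -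
      C (775574737235645925 / 1022355803052014078) * X ^ 4,
    X ^ 2 - C (243992539895178194230 / 401955504727599986241) * X ^ 3 -
      C (123463819718135904320 / 133985168242533328747) * X ^ 4,
    X ^ 3 + C (210302156585669707318965 / 878657156115990091447744) * X ^ 4,
    X ^ 4]

theorem quinticFactor_stein_identity (w z : ℂ) (hw : aeval w quinticFactor = 0)
    (hz : aeval z quinticFactor = 0) :
    (1 - w * z) *
        ∑ i, lyapunovWeight i * (aeval w (lyapunovSquare i) * aeval z (lyapunovSquare i)) =
      ∑ k ∈ Finset.range 5, (w * z) ^ k := by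
  simp only [quinticFactor, lyapunovWeight, lyapunovSquare, Fin.sum_univ_succ, Fin.sum_univ_zero,
    Matrix.cons_val_zero, Matrix.cons_val_succ, Finset.sum_range_succ, Finset.sum_range_zero,
    map_add, map_sub, map_mul, map_pow, map_one, aeval_C, aeval_X, Complex.coe_algebraMap] at *
  push_cast at *
  linear_combination
    (198549145675 / 3904141248 * (w ^ 5 + 317 / 237 * w ^ 4 + 135 / 237 * w ^ 3 - 71 / 237 * w ^ 2 -
        70 / 237 * w + 40 / 237) -
      w * (9956431225 / 1464052968 - 29389625425 / 1952070624 * w -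
        73029682045 / 11712423744 * w ^ 2 + 20298438935 / 732026484 * w ^ 3 +
        198549145675 / 3904141248 * w ^ 4)) * hz -
    z * (9956431225 / 1464052968 - 29389625425 / 1952070624 * z -
      73029682045 / 11712423744 * z ^ 2 + 20298438935 / 732026484 * z ^ 3 +
      198549145675 / 3904141248 * z ^ 4) * hw

theorem norm_lt_one_of_aeval_quinticFactor_eq_zero {z : ℂ} (hz : aeval z quinticFactor = 0) :
    ‖z‖ < 1 :=
  norm_lt_one_of_stein_identity (by norm_num) quinticFactor lyapunovWeight
    (fun i => by fin_cases i <;> norm_num [lyapunovWeight]) lyapunovSquare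
    quinticFactor_stein_identity hz

theorem stmt11 :
    ((X : ℂ[X])^6 + C (80/237) * X^5 - C (182/237) * X^4 - C (206/237) * X^3 +
        C (1/237) * X^2 + C (110/237) * X - C (40/237)).eval 1 = 0 ∧
    ∀ z : ℂ, ((X : ℂ[X])^6 + C (80/237) * X^5 - C (182/237) * X^4 - C (206/237) * X^3 +
        C (1/237) * X^2 + C (110/237) * X - C (40/237)).eval z = 0 →
      ‖z‖ ≤ 1 ∧ (‖z‖ = 1 →
        rootMultiplicity z ((X : ℂ[X])^6 + C (80/237) * X^5 - C (182/237) * X^4 -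
          C (206/237) * X^3 + C (1/237) * X^2 + C (110/237) * X - C (40/237)) = 1) := by
  set p : ℂ[X] := X ^ 6 + C (80 / 237) * X ^ 5 - C (182 / 237) * X ^ 4 - C (206 / 237) * X ^ 3 +
    C (1 / 237) * X ^ 2 + C (110 / 237) * X - C (40 / 237) with hp
  have hp1 : p.IsRoot 1 := by norm_num [hp]
  have hfactor : ∀ z, p.eval z = (z - 1) * aeval z quinticFactor := by
    intro z
    simp only [hp, quinticFactor, eval_add, eval_sub, eval_mul, eval_pow, eval_C, eval_X, map_add,
      map_sub, map_mul, map_pow, aeval_C, aeval_X, Complex.coe_algebraMap]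
    push_cast
    ring
  refine ⟨hp1, fun z hz => ?_⟩
  rcases mul_eq_zero.1 ((hfactor z).symm.trans hz) with hz1 | hq
  · obtain rfl := sub_eq_zero.1 hz1
    refine ⟨norm_one.le, fun _ => rootMultiplicity_eq_one_of_isRoot_of_not_isRoot_derivative hp1 ?_⟩
    norm_num [hp]
  · have hlt := norm_lt_one_of_aeval_quinticFactor_eq_zero hq
    exact ⟨hlt.le, fun h => absurd h hlt.ne⟩
end
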